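/- For any Hilbert C*-module N over A, the set M(N) of adjointable maps r : A → N, equipped with the inner product ⟨r₁, r₂⟩ = r₁* ∘ r₂ ∈ M(A), forms a pre-Hilbert module over the multiplier algebra M(A); in particular ⟨r₁, r₂⟩ · a = r₁*(r₂(a)) ∈ A for all a ∈ A. -/

import Mathlib

/-!
The pairing `⟨r₁, r₂⟩ = r₁* ∘ r₂` is a composite of adjointable maps, so its adjoint is
`r₂* ∘ r₁ = ⟨r₂, r₁⟩`. Positivity and definiteness come from the identity
`⟪a, r* (r a)⟫ = ⟪r a, r a⟫` and the corresponding properties of the inner product of `N`.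
-/

open scoped RightActions
open Filter

/-- The Hilbert C⋆-module class as in the Mathlib of December 2024 (right `A`-action, inner
product `A`-linear on the right in the second variable). Mathlib's `CStarModule` now uses a left
action and other conventions. -/
class RightCStarModule (A : outParam <| Type*) (E : Type*) [NonUnitalSemiring A] [StarRing A]
    [Module ℂ A] [AddCommGroup E] [Module ℂ E] [PartialOrder A] [SMul Aᵐᵒᵖ E] [Norm A] [Norm E]
    extends Inner A E where
  inner_add_right {x} {y} {z} : inner x (y + z) = inner x y + inner x z
  inner_self_nonneg {x} : 0 ≤ inner x x
  inner_self {x} : inner x x = 0 ↔ x = 0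
  inner_op_smul_right {a : A} {x y : E} : inner x (y <• a) = inner x y * a
  inner_smul_right_complex {z : ℂ} {x} {y} : inner x (z • y) = z • inner x y
  star_inner x y : star (inner x y) = inner y x
  norm_eq_sqrt_norm_inner_self x : ‖x‖ = √‖inner x x‖

/-- A C⋆-algebra as a Hilbert module over itself, with `⟪x, y⟫ = star x * y`
(the December 2024 Mathlib instance). -/
instance RightCStarModule.self (A : Type*) [NonUnitalCStarAlgebra A] [PartialOrder A]
    [StarOrderedRing A] : RightCStarModule A A where
  inner x y := star x * y
  inner_add_right := mul_add _ _ _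
  inner_self_nonneg := star_mul_self_nonneg _
  inner_self := CStarRing.star_mul_self_eq_zero_iff _
  inner_op_smul_right := by intro a x y; simp [mul_assoc]
  inner_smul_right_complex := mul_smul_comm _ _ _
  star_inner x y := by simp
  norm_eq_sqrt_norm_inner_self x := by
    rw [CStarRing.norm_star_mul_self, Real.sqrt_mul_self (norm_nonneg _)]

/-- `S` is an adjoint of `T` with respect to the `A`-valued inner products:
`⟪T x, y⟫ = ⟪x, S y⟫` for all `x, y`. -/
def IsAdjointPair (A : Type*) {E F : Type*} [Inner A E] [Inner A F]
    (T : E → F) (S : F → E) : Prop :=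
  ∀ (x : E) (y : F), (inner A (T x) y : A) = inner A x (S y)

/-- `T` is adjointable: it possesses an adjoint. -/
def HasAdjoint (A : Type*) {E F : Type*} [Inner A E] [Inner A F] (T : E → F) : Prop :=
  ∃ S : F → E, IsAdjointPair A T S

/-- `T` is `A`-linear: it commutes with the right `A`-action. -/
def IsALinear (A : Type*) {E F : Type*} [SMul Aᵐᵒᵖ E] [SMul Aᵐᵒᵖ F] (T : E → F) : Prop :=
  ∀ (x : E) (a : A), T (x <• a) = T x <• a

/-- A bounded operator `T : M → N` of Hilbert C*-modules is *locally adjointable* if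
`T ∘ γ` is adjointable for every adjointable (`A`-linear bounded) `γ : A → M`. -/
def LocallyAdjointable (A : Type*) [NonUnitalCStarAlgebra A] [PartialOrder A]
    [StarOrderedRing A] {M N : Type*}
    [NormedAddCommGroup M] [NormedSpace ℂ M] [SMul Aᵐᵒᵖ M] [RightCStarModule A M]
    [Inner A N] (T : M → N) : Prop :=
  ∀ γ : A →L[ℂ] M, IsALinear A ⇑γ → HasAdjoint A ⇑γ → HasAdjoint A (T ∘ ⇑γ)

variable {A : Type*} [NonUnitalCStarAlgebra A] [PartialOrder A] [StarOrderedRing A]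
variable {K N : Type*}
  [NormedAddCommGroup K] [NormedSpace ℂ K] [SMul Aᵐᵒᵖ K] [RightCStarModule A K]
  [NormedAddCommGroup N] [NormedSpace ℂ N] [SMul Aᵐᵒᵖ N] [RightCStarModule A N]

namespace IsAdjointPair

section Inner

variable {B E F G : Type*} [Inner B E] [Inner B F] [Inner B G]

theorem comp {T : E → F} {S : F → E} {T' : F → G} {S' : G → F}
    (h : IsAdjointPair B T S) (h' : IsAdjointPair B T' S') :
    IsAdjointPair B (T' ∘ T) (S ∘ S') :=
  fun x z => (h' (T x) z).trans (h x (S' z))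

theorem inner_self_comp {T : E → F} {S : F → E} (h : IsAdjointPair B T S) (x : E) :
    (inner B x (S (T x)) : B) = inner B (T x) (T x) :=
  (h x (T x)).symm

end Inner

section RightCStarModule

variable {B E F : Type*} [NonUnitalRing B] [StarRing B] [Module ℂ B] [PartialOrder B] [Norm B]
  [AddCommGroup E] [Module ℂ E] [SMul Bᵐᵒᵖ E] [Norm E] [RightCStarModule B E]
  [AddCommGroup F] [Module ℂ F] [SMul Bᵐᵒᵖ F] [Norm F] [RightCStarModule B F]

theorem _root_.RightCStarModule.inner_zero_right (x : E) : (inner B x (0 : E) : B) = 0 := by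
  have h := RightCStarModule.inner_add_right (A := B) (x := x) (y := (0 : E)) (z := 0)
  rwa [add_zero, left_eq_add] at h

theorem symm {T : E → F} {S : F → E} (h : IsAdjointPair B T S) : IsAdjointPair B S T :=
  fun y x => by
    rw [← RightCStarModule.star_inner x (S y), ← h, RightCStarModule.star_inner]

theorem map_zero {T : E → F} {S : F → E} (h : IsAdjointPair B T S) : S 0 = 0 :=
  RightCStarModule.inner_self.mp <| by
    rw [← h, RightCStarModule.inner_zero_right]

theorem inner_self_comp_nonneg {T : E → F} {S : F → E} (h : IsAdjointPair B T S) (x : E) :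
    (0 : B) ≤ inner B x (S (T x)) :=
  h.inner_self_comp x ▸ RightCStarModule.inner_self_nonneg

theorem comp_eq_zero_iff {T : E → F} {S : F → E} (h : IsAdjointPair B T S) :
    (∀ x, S (T x) = 0) ↔ ∀ x, T x = 0 := by
  refine ⟨fun hST x => RightCStarModule.inner_self.mp ?_, fun hT x => by rw [hT, h.map_zero]⟩
  rw [← h.inner_self_comp, hST, RightCStarModule.inner_zero_right]

end RightCStarModule

end IsAdjointPair

theorem multiplier_module_pre_hilbert_general
    (r r₁ r₂ : A →L[ℂ] N) (s s₁ s₂ : N → A)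
    (hadj : IsAdjointPair A ⇑r s) (hadj₁ : IsAdjointPair A ⇑r₁ s₁)
    (hadj₂ : IsAdjointPair A ⇑r₂ s₂) :
    -- the pairing `⟨r₁, r₂⟩ : a ↦ r₁*(r₂ a)` is adjointable with adjoint `⟨r₂, r₁⟩`,
    -- hence a two-sided multiplier of `A`
    IsAdjointPair A (fun a : A => s₁ (r₂ a)) (fun a : A => s₂ (r₁ a)) ∧
    -- positivity: `⟪a, ⟨r, r⟩ a⟫ = ⟪r a, r a⟫ ≥ 0`
    (∀ a : A, (inner A a (s (r a)) : A) = inner A (r a) (r a) ∧ (0 : A) ≤ inner A a (s (r a))) ∧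
    -- definiteness: `⟨r, r⟩ = 0` iff `r = 0`
    ((∀ a : A, s (r a) = 0) ↔ r = 0) ∧
    -- `M(A)`-sesquilinearity in the second variable (right action by a multiplier `m`)
    (∀ m : A →L[ℂ] A, IsALinear A ⇑m → HasAdjoint A ⇑m →
      ∀ a : A, s₁ (r₂ (m a)) = (fun a : A => s₁ (r₂ a)) (m a)) :=
  ⟨hadj₂.comp hadj₁.symm,
    fun a => ⟨hadj.inner_self_comp a, hadj.inner_self_comp_nonneg a⟩,
    hadj.comp_eq_zero_iff.trans (by simp only [ContinuousLinearMap.ext_iff, zero_apply]),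
    fun _ _ _ _ => rfl⟩

/-- The set `M(N)` of adjointable maps `r : A → N`, with `⟨r₁, r₂⟩ := r₁* ∘ r₂`, is a
pre-Hilbert module over the multiplier algebra: the pairing `a ↦ r₁*(r₂ a)` is an
adjointable map `A → A` (i.e.\ a multiplier, with adjoint the pairing of `r₂` and `r₁`),
it is positive definite, and in particular `⟨r₁, r₂⟩ · a = r₁*(r₂ a) ∈ A`. -/
theorem multiplier_module_pre_hilbert
    (r r₁ r₂ : A →L[ℂ] N) (s s₁ s₂ : N → A)
    (hr : IsALinear A ⇑r) (hr₁ : IsALinear A ⇑r₁) (hr₂ : IsALinear A ⇑r₂)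
    (hadj : IsAdjointPair A ⇑r s) (hadj₁ : IsAdjointPair A ⇑r₁ s₁)
    (hadj₂ : IsAdjointPair A ⇑r₂ s₂) :
    -- the pairing `⟨r₁, r₂⟩ : a ↦ r₁*(r₂ a)` is adjointable with adjoint `⟨r₂, r₁⟩`,
    -- hence a two-sided multiplier of `A`
    IsAdjointPair A (fun a : A => s₁ (r₂ a)) (fun a : A => s₂ (r₁ a)) ∧
    -- positivity: `⟪a, ⟨r, r⟩ a⟫ = ⟪r a, r a⟫ ≥ 0`
    (∀ a : A, (inner A a (s (r a)) : A) = inner A (r a) (r a) ∧ (0 : A) ≤ inner A a (s (r a))) ∧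
    -- definiteness: `⟨r, r⟩ = 0` iff `r = 0`
    ((∀ a : A, s (r a) = 0) ↔ r = 0) ∧
    -- `M(A)`-sesquilinearity in the second variable (right action by a multiplier `m`)
    (∀ m : A →L[ℂ] A, IsALinear A ⇑m → HasAdjoint A ⇑m →
      ∀ a : A, s₁ (r₂ (m a)) = (fun a : A => s₁ (r₂ a)) (m a)) :=
  multiplier_module_pre_hilbert_general r r₁ r₂ s s₁ s₂ hadj hadj₁ hadj₂
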